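/- arXiv:2212.05524 — 5 statements merged into one kernel-verified Lean document; each statement's English description precedes it below -/
import Mathlib

section
/- Marginal consistency of the latent-matrix prior on partial orders: let m, K : ℕ and for each j : Fin m let μ_j be a Borel probability measure on Fin K → ℝ, and let μ be the product measure ⊗_{j : Fin m} μ_j on Fin m → Fin K → ℝ (independent rows). Then for every n ≤ m and every injection e : Fin n → Fin m, the pushforward of μ under the map Z ↦ (fun (i j : Fin n) => decide (∀ k : Fin K, Z (e i) k > Z (e j) k)), valued in the finite type Fin n → Fin n → Bool, equals the pushforward of the product measure ⊗_{i : Fin n} μ_{e i} on Fin n → Fin K → ℝ under W ↦ (fun (i j : Fin n) => decide (∀ k : Fin K, W i k > W j k)). In words: the law of the suborder of h(Z) on a subset of actors equals the law of the dominance order generated directly from the latent rows of that subset. -/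
open MeasureTheory

lemma measurable_decideMap {n K : ℕ} :
    Measurable (fun W : Fin n → Fin K → ℝ =>
      fun (i j : Fin n) => decide (∀ k : Fin K, W i k > W j k)) := by
  apply measurable_pi_lambda; intro i
  apply measurable_pi_lambda; intro j
  apply measurable_to_countable'
  intro b
  have hset : MeasurableSet {W : Fin n → Fin K → ℝ | ∀ k : Fin K, W i k > W j k} := by
    have : {W : Fin n → Fin K → ℝ | ∀ k : Fin K, W i k > W j k} =
        ⋂ k : Fin K, {W | W j k < W i k} := by
      ext W; simp [Set.mem_iInter]
    rw [this]
    exact MeasurableSet.iInter fun k => measurableSet_lt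
      ((measurable_pi_apply j).comp measurable_id |>.eval)
      ((measurable_pi_apply i).comp measurable_id |>.eval)
  cases b with
  | true =>
      have : (fun W : Fin n → Fin K → ℝ => decide (∀ k : Fin K, W i k > W j k)) ⁻¹' {true}
          = {W | ∀ k : Fin K, W i k > W j k} := by
        ext W; simp
      rw [show ({true} : Set Bool) = {true} from rfl] at this
      simpa using this ▸ hset
  | false =>
      have : (fun W : Fin n → Fin K → ℝ => decide (∀ k : Fin K, W i k > W j k)) ⁻¹' {false}
          = {W | ∀ k : Fin K, W i k > W j k}ᶜ := by
        ext W; simp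
      simpa using this ▸ hset.compl

lemma pi_map_restrict {m n K : ℕ} (μs : Fin m → Measure (Fin K → ℝ))
    [∀ j, IsProbabilityMeasure (μs j)] (e : Fin n → Fin m) (he : Function.Injective e) :
    (Measure.pi μs).map (fun Z (i : Fin n) => Z (e i)) =
      Measure.pi (fun i => μs (e i)) := by
  refine (Measure.pi_eq fun s hs => ?_).symm
  have hmeas : Measurable (fun Z : Fin m → Fin K → ℝ => fun i : Fin n => Z (e i)) :=
    measurable_pi_lambda _ fun i => measurable_pi_apply (e i)
  rw [Measure.map_apply hmeas (MeasurableSet.univ_pi hs)]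
  classical
  set t : Fin m → Set (Fin K → ℝ) := Function.extend e s (fun _ => Set.univ) with ht
  have hpre : (fun Z : Fin m → Fin K → ℝ => fun i : Fin n => Z (e i)) ⁻¹'
      Set.pi Set.univ s = Set.pi Set.univ t := by
    ext Z
    simp only [Set.mem_preimage, Set.mem_pi, Set.mem_univ, true_implies, ht]
    constructor
    · intro h j
      rcases em (∃ i, e i = j) with ⟨i, rfl⟩ | hj
      · rw [he.extend_apply]; exact h i
      · rw [Function.extend_apply' _ _ _ hj]; trivial
    · intro h i
      have := h (e i)
      rwa [he.extend_apply] at this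
  rw [hpre, Measure.pi_pi]
  have ht_one : ∀ j ∉ Finset.univ.image e, μs j (t j) = 1 := by
    intro j hj
    have hj' : ¬∃ i, e i = j := by
      rintro ⟨i, rfl⟩; exact hj (Finset.mem_image_of_mem e (Finset.mem_univ i))
    rw [ht, Function.extend_apply' _ _ _ hj']
    exact measure_univ
  rw [← Finset.prod_subset (Finset.subset_univ (Finset.univ.image e))
      (fun j _ hj => ht_one j hj)]
  rw [Finset.prod_image (fun a _ b _ h => he h)]
  apply Finset.prod_congr rfl
  intro i _
  rw [ht, he.extend_apply]

/-- Marginal consistency of the latent-matrix prior on partial orders: with independent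
rows `μ_j`, the law of the suborder of the dominance order `h(Z)` on a subset of actors
(selected by an injection `e : Fin n → Fin m`) equals the law of the dominance order
generated directly from the latent rows of that subset. -/
theorem stmt1 {m K : ℕ} (μs : Fin m → Measure (Fin K → ℝ))
    [∀ j, IsProbabilityMeasure (μs j)]
    (n : ℕ) (hn : n ≤ m) (e : Fin n → Fin m) (he : Function.Injective e) :
    (Measure.pi μs).map
        (fun Z : Fin m → Fin K → ℝ =>
          fun (i j : Fin n) => decide (∀ k : Fin K, Z (e i) k > Z (e j) k)) =
      (Measure.pi (fun i : Fin n => μs (e i))).map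
        (fun W : Fin n → Fin K → ℝ =>
          fun (i j : Fin n) => decide (∀ k : Fin K, W i k > W j k)) := by
  rw [← pi_map_restrict μs e he,
    Measure.map_map measurable_decideMap
      (measurable_pi_lambda _ fun i => measurable_pi_apply (e i))]
  rfl
end

section
/- Realization of partial orders of bounded dimension by latent matrices: let ι be a finite type, K : ℕ with K ≥ 1, and let r be a strict partial order on ι which is the intersection of K strict total orders ℓ_1, …, ℓ_K on ι (i.e. r i j ↔ ∀ k, ℓ_k i j). Then there exists a matrix Z : ι → Fin K → ℝ such that h(Z) = r; moreover Z can be chosen so that for each k the column relation i ↦ Z i k realizes ℓ_k, i.e. Z i k > Z j k ↔ ℓ_k i j for all i, j. -/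
/-- The dominance order determined by a latent feature matrix `Z`. -/
def domOrder {ι : Type*} {K : ℕ} (Z : ι → Fin K → ℝ) : ι → ι → Prop :=
  fun i j => ∀ k : Fin K, Z i k > Z j k

/-- Realization of partial orders of bounded dimension by latent matrices: if a strict
partial order `r` is the intersection of `K ≥ 1` strict total orders `ℓ k`, then there is
a latent matrix `Z` with `h(Z) = r`, whose `k`-th column realizes `ℓ k`. -/
theorem stmt4 {ι : Type*} [Fintype ι] {K : ℕ} (hK : 1 ≤ K)
    (ℓ : Fin K → ι → ι → Prop)
    (hirr : ∀ k, Irreflexive (ℓ k)) (htrans : ∀ k, Transitive (ℓ k))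
    (htri : ∀ k, ∀ i j : ι, i ≠ j → ℓ k i j ∨ ℓ k j i)
    (r : ι → ι → Prop) (hrirr : Irreflexive r) (hrtrans : Transitive r)
    (hr : ∀ i j : ι, r i j ↔ ∀ k : Fin K, ℓ k i j) :
    ∃ Z : ι → Fin K → ℝ,
      domOrder Z = r ∧ ∀ (k : Fin K) (i j : ι), Z i k > Z j k ↔ ℓ k i j := by
  classical
  set Z : ι → Fin K → ℝ :=
    fun i k => ((Finset.univ.filter (fun x => ℓ k i x)).card : ℝ) with hZ
  have mono : ∀ (k : Fin K) (a b : ι), ℓ k a b →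
      (Finset.univ.filter (fun x => ℓ k b x)).card <
        (Finset.univ.filter (fun x => ℓ k a x)).card := by
    intro k a b hab
    apply Finset.card_lt_card
    constructor
    · intro x hx
      simp only [Finset.mem_filter, Finset.mem_univ, true_and] at hx ⊢
      exact htrans k hab hx
    · intro hsub
      have hb : b ∈ Finset.univ.filter (fun x => ℓ k a x) := by simp [hab]
      have := hsub hb
      simp only [Finset.mem_filter, Finset.mem_univ, true_and] at this
      exact hirr k b this
  have key : ∀ (k : Fin K) (i j : ι), Z i k > Z j k ↔ ℓ k i j := by
    intro k i j
    constructor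
    · intro h
      have hnat : (Finset.univ.filter (fun x => ℓ k j x)).card <
          (Finset.univ.filter (fun x => ℓ k i x)).card := by
        simp only [hZ] at h; exact_mod_cast h
      by_contra hn
      rcases eq_or_ne i j with rfl | hne
      · exact lt_irrefl _ hnat
      · rcases htri k i j hne with h1 | h1
        · exact hn h1
        · exact absurd (mono k j i h1) (Nat.lt_asymm hnat)
    · intro h
      simp only [hZ]
      exact_mod_cast mono k i j h
  refine ⟨Z, ?_, key⟩
  funext i j
  simp only [domOrder, hr i j, eq_iff_iff]
  exact forall_congr' fun k => key k i j
end

section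
/- Positive prior probability for every representable partial order: let m, K : ℕ with m ≥ 1, K ≥ 1, and let μ be a probability measure on Fin m → Fin K → ℝ of the form μ = f · volume, where f is a measurable density that is strictly positive everywhere. If r is a strict partial order on Fin m that is the intersection of K strict total orders on Fin m, then μ {Z : Fin m → Fin K → ℝ | h(Z) = r} > 0. -/
open MeasureTheory

section Aux

open Classical in
/-- Rank lemma: for a strict total order `ℓ` on `Fin m`, `ℓ i j` holds iff
the "down-set" of `j` is strictly smaller than that of `i`. -/
lemma rank_lt_iff {m : ℕ} (ℓ : Fin m → Fin m → Prop)
    (hirr : Irreflexive ℓ) (htrans : Transitive ℓ)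
    (htri : ∀ i j : Fin m, i ≠ j → ℓ i j ∨ ℓ j i) (i j : Fin m) :
    ℓ i j ↔ (Finset.univ.filter (fun x => ℓ j x)).card
      < (Finset.univ.filter (fun x => ℓ i x)).card := by
  classical
  have key : ∀ i j : Fin m, ℓ i j →
      (Finset.univ.filter (fun x => ℓ j x)).card
        < (Finset.univ.filter (fun x => ℓ i x)).card := by
    intro i j hij
    apply Finset.card_lt_card
    constructor
    · intro x hx
      simp only [Finset.mem_filter, Finset.mem_univ, true_and] at hx ⊢
      exact htrans hij hx
    · intro hsub
      have : j ∈ Finset.univ.filter (fun x => ℓ i x) := by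
        simp [hij]
      have := hsub this
      simp only [Finset.mem_filter, Finset.mem_univ, true_and] at this
      exact hirr j this
  constructor
  · exact key i j
  · intro hlt
    by_contra hnij
    rcases eq_or_ne i j with rfl | hne
    · exact lt_irrefl _ hlt
    · rcases htri i j hne with h | h
      · exact hnij h
      · exact lt_asymm hlt (key j i h)

end Aux

/-- Positive prior probability for every representable partial order: if the prior `μ`
has an everywhere strictly positive measurable density with respect to the product
Lebesgue measure, and `r` is a strict partial order that is the intersection of `K`
strict total orders, then `μ {Z | h(Z) = r} > 0`. -/
theorem stmt6 {m K : ℕ} (hm : 1 ≤ m) (hK : 1 ≤ K)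
    (f : (Fin m → Fin K → ℝ) → ENNReal) (hf : Measurable f) (hfpos : ∀ Z, 0 < f Z)
    (μ : Measure (Fin m → Fin K → ℝ)) (hμ : μ = volume.withDensity f)
    (hprob : IsProbabilityMeasure μ)
    (ℓ : Fin K → Fin m → Fin m → Prop)
    (hirr : ∀ k, Irreflexive (ℓ k)) (htrans : ∀ k, Transitive (ℓ k))
    (htri : ∀ k, ∀ i j : Fin m, i ≠ j → ℓ k i j ∨ ℓ k j i)
    (r : Fin m → Fin m → Prop) (hrirr : Irreflexive r) (hrtrans : Transitive r)
    (hr : ∀ i j : Fin m, r i j ↔ ∀ k : Fin K, ℓ k i j) :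
    0 < μ {Z : Fin m → Fin K → ℝ | domOrder Z = r} := by
  classical
  -- the witness matrix: Z0 i k = rank of i under ℓ k
  set Z0 : Fin m → Fin K → ℝ :=
    fun i k => ((Finset.univ.filter (fun x => ℓ k i x)).card : ℝ) with hZ0def
  have hZ0lt : ∀ k i j, ℓ k i j ↔ Z0 j k < Z0 i k := by
    intro k i j
    rw [rank_lt_iff (ℓ k) (hirr k) (htrans k) (htri k)]
    simp [hZ0def]
  -- the open set
  set U : Set (Fin m → Fin K → ℝ) :=
    {Z | (∀ i j, r i j → ∀ k, Z j k < Z i k) ∧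
         (∀ i j, ¬ r i j → i ≠ j → ∃ k, Z i k < Z j k)} with hUdef
  have hZ0U : Z0 ∈ U := by
    constructor
    · intro i j hij k
      exact (hZ0lt k i j).mp ((hr i j).mp hij k)
    · intro i j hij hne
      rw [hr] at hij
      push_neg at hij
      obtain ⟨k, hk⟩ := hij
      rcases htri k i j hne with h | h
      · exact absurd h hk
      · exact ⟨k, (hZ0lt k j i).mp h⟩
  have hUopen : IsOpen U := by
    have h1 : IsOpen {Z : Fin m → Fin K → ℝ |
        ∀ i j, r i j → ∀ k, Z j k < Z i k} := by
      have : {Z : Fin m → Fin K → ℝ | ∀ i j, r i j → ∀ k, Z j k < Z i k}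
          = ⋂ i, ⋂ j, ⋂ (_ : r i j), ⋂ k, {Z | Z j k < Z i k} := by
        ext Z; simp [Set.mem_iInter]
      rw [this]
      refine isOpen_iInter_of_finite fun i => isOpen_iInter_of_finite fun j =>
        isOpen_iInter_of_finite fun _ => isOpen_iInter_of_finite fun k => ?_
      exact isOpen_lt (by fun_prop) (by fun_prop)
    have h2 : IsOpen {Z : Fin m → Fin K → ℝ |
        ∀ i j, ¬ r i j → i ≠ j → ∃ k, Z i k < Z j k} := by
      have : {Z : Fin m → Fin K → ℝ | ∀ i j, ¬ r i j → i ≠ j → ∃ k, Z i k < Z j k}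
          = ⋂ i, ⋂ j, ⋂ (_ : ¬ r i j), ⋂ (_ : i ≠ j), ⋃ k, {Z | Z i k < Z j k} := by
        ext Z; simp [Set.mem_iInter, Set.mem_iUnion]
      rw [this]
      refine isOpen_iInter_of_finite fun i => isOpen_iInter_of_finite fun j =>
        isOpen_iInter_of_finite fun _ => isOpen_iInter_of_finite fun _ =>
        isOpen_iUnion fun k => ?_
      exact isOpen_lt (by fun_prop) (by fun_prop)
    exact h1.inter h2
  have hUsub : U ⊆ {Z : Fin m → Fin K → ℝ | domOrder Z = r} := by
    intro Z ⟨h1, h2⟩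
    funext i j
    apply propext
    constructor
    · intro hd
      by_contra hnr
      rcases eq_or_ne i j with rfl | hne
      · exact lt_irrefl _ (hd ⟨0, hK⟩)
      · obtain ⟨k, hk⟩ := h2 i j hnr hne
        exact lt_asymm hk (hd k)
    · intro hrij k
      exact h1 i j hrij k
  have hvolU : 0 < volume U := hUopen.measure_pos volume ⟨Z0, hZ0U⟩
  have hμU : 0 < μ U := by
    rw [hμ, withDensity_apply f hUopen.measurableSet]
    rw [pos_iff_ne_zero]
    intro h0
    have := (lintegral_eq_zero_iff hf).mp h0
    have h0' : (volume.restrict U) {x | f x ≠ 0} = 0 := by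
      simpa [Filter.EventuallyEq, ae_iff] using this
    have hset : {x : Fin m → Fin K → ℝ | f x ≠ 0} = Set.univ := by
      ext x; simp [(hfpos x).ne']
    rw [hset, Measure.restrict_apply_univ] at h0'
    exact hvolU.ne' h0'
  exact hμU.trans_le (measure_mono hUsub)
end

section
/- Normalization of the top-down queue-jumping observation model: let r be a strict partial order on a finite type A with |A| = m ≥ 1, and let p ∈ [0,1]. For an enumeration Y : Fin m ≃ A (written Y_1, …, Y_m), define q_D(Y) = ∏_{j=1}^{m} ( p/(m − j + 1) + (1 − p) · C_{Y_j}(r[{Y_j, …, Y_m}]) / C(r[{Y_j, …, Y_m}]) ), where r[{Y_j, …, Y_m}] is the suborder of r on the suffix set {Y_j, …, Y_m}. Then the sum of q_D(Y) over all m! enumerations Y of A equals 1. -/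
/-
Split an enumeration `Y` of `A` into its first entry `a = Y 0` and the enumeration of `A \ {a}`
given by the remaining entries. The first factor of `q_D(Y)` depends only on `a`; the others are
the factors of `q_D` of the tail for the suborder `r[A \ {a}]`, since linear extension counts are
invariant under relation isomorphisms of the suborders involved. By induction the tails sum to
`1`, which leaves `∑ a, (p / m + (1 - p) C_a(r) / C(r)) = p + (1 - p) = 1`: the linear extensions
of `r` are partitioned by their first entry, and `C(r) ≥ 1` by Szpilrajn's extension theorem.
-/

open scoped Classical

/-- `Y` is a linear extension of `r`: for positions `i < j`, the later element is never
above the earlier one. -/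
def IsLinExt {A : Type*} {n : ℕ} (r : A → A → Prop) (Y : Fin n ≃ A) : Prop :=
  ∀ i j : Fin n, i < j → ¬ r (Y j) (Y i)

/-- `C(r)`: the number of linear extensions of `r`. -/
noncomputable def numExt {A : Type*} [Fintype A] (r : A → A → Prop) : ℕ :=
  Nat.card {Y : Fin (Fintype.card A) ≃ A // IsLinExt r Y}

/-- `C_a(r)`: the number of linear extensions of `r` whose first entry is `a`. -/
noncomputable def numExtFirst {A : Type*} [Fintype A] (r : A → A → Prop) (a : A) : ℕ :=
  Nat.card {Y : Fin (Fintype.card A) ≃ A //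
    IsLinExt r Y ∧ ∀ i : Fin (Fintype.card A), (i : ℕ) = 0 → Y i = a}

/-- The suborder `r[O]`: the restriction of `r` to the subset `O`. -/
def subrel {A : Type*} (r : A → A → Prop) (O : Set A) : O → O → Prop :=
  fun x y => r (x : A) (y : A)

theorem exists_isLinExt {A : Type*} [Fintype A] (r : A → A → Prop) [IsStrictOrder A r] :
    ∃ Y : Fin (Fintype.card A) ≃ A, IsLinExt r Y := by
  let _ := partialOrderOfSO r
  let _ : Fintype (LinearExtension A) := ‹Fintype A›
  let e : Fin (Fintype.card A) ≃o LinearExtension A := monoEquivOfFin (LinearExtension A) rfl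
  refine ⟨e.toEquiv, fun i j hij hji => (e.strictMono hij).not_ge ?_⟩
  exact (toLinearExtension (α := A)).monotone (Or.inr hji : (show A from e j) ≤ show A from e i)

section RelIso

variable {A B : Type*} {r : A → A → Prop} {s : B → B → Prop}

theorem isLinExt_trans_relIso {n : ℕ} (e : r ≃r s) (Y : Fin n ≃ A) :
    IsLinExt s (Y.trans e.toEquiv) ↔ IsLinExt r Y := by
  simp [IsLinExt, e.map_rel_iff]

theorem isLinExt_finCongr_trans {m n : ℕ} (h : m = n) (Y : Fin n ≃ A) :
    IsLinExt r ((finCongr h).trans Y) ↔ IsLinExt r Y := by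
  subst h
  rfl

variable [Fintype A] [Fintype B]

def enumCongr (e : A ≃ B) : (Fin (Fintype.card A) ≃ A) ≃ (Fin (Fintype.card B) ≃ B) :=
  (finCongr (Fintype.card_congr e)).equivCongr e

theorem isLinExt_enumCongr (e : r ≃r s) (Y : Fin (Fintype.card A) ≃ A) :
    IsLinExt s (enumCongr e.toEquiv Y) ↔ IsLinExt r Y :=
  (isLinExt_finCongr_trans (Fintype.card_congr e.toEquiv).symm _).trans
    (isLinExt_trans_relIso e Y)

theorem numExt_congr (e : r ≃r s) : numExt r = numExt s :=
  Nat.card_congr <| Equiv.subtypeEquiv _ fun Y => (isLinExt_enumCongr e Y).symm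

theorem numExtFirst_congr (e : r ≃r s) (a : A) : numExtFirst r a = numExtFirst s (e a) := by
  refine Nat.card_congr <| Equiv.subtypeEquiv (enumCongr e.toEquiv) fun Y => ?_
  rw [isLinExt_enumCongr e Y]
  refine and_congr_right fun _ => ?_
  simp only [enumCongr, Equiv.equivCongr_apply_apply, RelIso.coe_fn_toEquiv, e.injective.eq_iff]
  exact (finCongr (Fintype.card_congr e.toEquiv)).forall_congr fun {i} => by simp

end RelIso

theorem numExt_pos {A : Type*} [Fintype A] (r : A → A → Prop) [IsStrictOrder A r] :
    0 < numExt r :=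
  have ⟨Y, hY⟩ := exists_isLinExt r
  have : Nonempty {Y : Fin (Fintype.card A) ≃ A // IsLinExt r Y} := ⟨⟨Y, hY⟩⟩
  Nat.card_pos

theorem sum_numExtFirst {A : Type*} [Fintype A] [Nonempty A] (r : A → A → Prop) :
    ∑ a, numExtFirst r a = numExt r := by
  let i₀ : Fin (Fintype.card A) := ⟨0, Fintype.card_pos⟩
  have hfirst (Y : Fin (Fintype.card A) ≃ A) (a : A) :
      (∀ i : Fin (Fintype.card A), (i : ℕ) = 0 → Y i = a) ↔ Y i₀ = a :=
    ⟨fun h => h i₀ rfl, fun h i hi => (Fin.ext hi : i = i₀) ▸ h⟩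
  simp only [numExtFirst, numExt, hfirst]
  rw [Nat.card_congr (Equiv.sigmaFiberEquiv fun Y : {Y // IsLinExt r Y} => Y.1 i₀).symm,
    Nat.card_sigma]
  exact Finset.sum_congr rfl fun a _ =>
    Nat.card_congr (Equiv.subtypeSubtypeEquivSubtypeInter _ _).symm

/-- The factor of `q_D` for choosing `a` next when `A` is the set of elements still to be
listed. -/
noncomputable def firstChoiceProb {A : Type*} [Fintype A] (p : ℝ) (r : A → A → Prop) (a : A) :
    ℝ :=
  p / Fintype.card A + (1 - p) * numExtFirst r a / numExt r

theorem sum_firstChoiceProb {A : Type*} [Fintype A] [Nonempty A] (p : ℝ) (r : A → A → Prop)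
    [IsStrictOrder A r] : ∑ a, firstChoiceProb p r a = 1 := by
  have hC : (numExt r : ℝ) ≠ 0 := Nat.cast_ne_zero.mpr (numExt_pos r).ne'
  have hA : (Fintype.card A : ℝ) ≠ 0 := Nat.cast_ne_zero.mpr Fintype.card_ne_zero
  simp only [firstChoiceProb, Finset.sum_add_distrib, Finset.sum_const, Finset.card_univ,
    nsmul_eq_mul, mul_div_assoc, ← Finset.mul_sum, ← Finset.sum_div, ← Nat.cast_sum,
    sum_numExtFirst]
  field_simp
  ring

theorem firstChoiceProb_congr {A B : Type*} [Fintype A] [Fintype B] (p : ℝ) {r : A → A → Prop}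
    {s : B → B → Prop} (e : r ≃r s) (a : A) :
    firstChoiceProb p r a = firstChoiceProb p s (e a) := by
  rw [firstChoiceProb, firstChoiceProb, Fintype.card_congr e.toEquiv, numExt_congr e,
    numExtFirst_congr e]

section Subrel

variable {A B : Type*} {r : A → A → Prop} {s : B → B → Prop}

def subrelIsoOfForallMem {O : Set A} (h : ∀ x, x ∈ O) : subrel r O ≃r r :=
  ⟨Equiv.subtypeUnivEquiv h, Iff.rfl⟩

noncomputable def subrelIsoOfImage (f : s ↪r r) {S : Set B} {O : Set A} (h : f '' S = O) :
    subrel s S ≃r subrel r O :=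
  ⟨(Equiv.Set.image f S f.injective).trans (Equiv.setCongr h), f.map_rel_iff⟩

end Subrel

def enumSuccEquiv (B : Type*) [DecidableEq B] (n : ℕ) :
    (Fin (n + 1) ≃ B) ≃ Σ a : B, (Fin n ≃ {x // x ≠ a}) :=
  ((finSuccEquiv n).equivCongr (Equiv.refl B)).trans <|
    (Equiv.sigmaFiberEquiv fun Y : Option (Fin n) ≃ B => Y none).symm.trans <|
      Equiv.sigmaCongrRight Equiv.optionSubtype

/-- `q_D(Y)`. The suffix `{Y_j, …}` is spelled as in the statement (rather than as `Y '' Ici j`)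
so that the `Fintype` instances on its subtype agree with the statement's. -/
noncomputable def queueJumpProb {B : Type*} [Fintype B] [DecidableEq B] (p : ℝ)
    (r : B → B → Prop) {n : ℕ} (Y : Fin n ≃ B) : ℝ :=
  ∏ j, firstChoiceProb p (subrel r {a | ∃ i, j ≤ i ∧ Y i = a}) ⟨Y j, j, le_rfl, rfl⟩

theorem queueJumpProb_eq_mul {B : Type*} [Fintype B] [DecidableEq B] (p : ℝ)
    (r : B → B → Prop) {n : ℕ} (Y : Fin (n + 1) ≃ B) {a : B} (Z : Fin n ≃ {x // x ≠ a})
    (h₀ : Y 0 = a) (hsucc : ∀ i, Y i.succ = Z i) :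
    queueJumpProb p r Y = firstChoiceProb p r a * queueJumpProb p (Subrel r (· ≠ a)) Z := by
  rw [queueJumpProb, Fin.prod_univ_succ]
  congr 1
  · subst h₀
    exact firstChoiceProb_congr p (subrelIsoOfForallMem (O := {a | ∃ i, 0 ≤ i ∧ Y i = a})
      fun x => ⟨Y.symm x, Fin.zero_le _, by simp⟩) _
  · refine Finset.prod_congr rfl fun j _ => ?_
    have hO : Subrel.relEmbedding r (· ≠ a) '' {b | ∃ i, j ≤ i ∧ Z i = b} =
        {a | ∃ i, j.succ ≤ i ∧ Y i = a} := by
      change _ '' (Z '' Set.Ici j) = Y '' Set.Ici j.succ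
      rw [Set.image_image, ← Fin.image_succ_Ici, Set.image_image]
      simp [hsucc]
    rw [firstChoiceProb_congr p (subrelIsoOfImage _ hO)]
    congr
    exact hsucc j

theorem card_suffix {B : Type*} {n : ℕ} (Y : Fin n ≃ B) (j : Fin n) :
    Nat.card {a | ∃ i, j ≤ i ∧ Y i = a} = n - j := by
  change Nat.card ↥(Y '' Set.Ici j) = n - j
  rw [Nat.card_image_of_injective Y.injective]
  simp

theorem sum_queueJumpProb (p : ℝ) (n : ℕ) {B : Type*} [Fintype B] [DecidableEq B]
    (r : B → B → Prop) [IsStrictOrder B r] (hB : Fintype.card B = n) :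
    ∑ Y : Fin n ≃ B, queueJumpProb p r Y = 1 := by
  induction n generalizing B with
  | zero =>
    simp [queueJumpProb, Fintype.card_equiv (Fintype.equivFinOfCardEq hB).symm]
  | succ n ih =>
    have : Nonempty B := Fintype.card_pos_iff.mp (hB ▸ n.succ_pos)
    have hcard (a : B) : Fintype.card {x // x ≠ a} = n := by
      simp [Fintype.card_subtype_compl, hB]
    calc ∑ Y, queueJumpProb p r Y
        = ∑ σ : Σ a : B, (Fin n ≃ {x // x ≠ a}),
            firstChoiceProb p r σ.1 * queueJumpProb p (Subrel r (· ≠ σ.1)) σ.2 :=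
          Fintype.sum_equiv (enumSuccEquiv B n) _ _ fun Y =>
            queueJumpProb_eq_mul p r Y _ rfl fun _ => rfl
      _ = ∑ a, firstChoiceProb p r a := by
          simp only [Fintype.sum_sigma, ← Finset.mul_sum, ih _ (hcard _), mul_one]
      _ = 1 := sum_firstChoiceProb p r

theorem stmt7_general {A : Type*} [Fintype A] [DecidableEq A] (m : ℕ)
    (hcard : Fintype.card A = m)
    (r : A → A → Prop) (hirr : Irreflexive r) (htrans : Transitive r)
    (p : ℝ) :
    ∑ Y : Fin m ≃ A, ∏ j : Fin m,
      (p / ((m - (j : ℕ) : ℕ) : ℝ) +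
        (1 - p) *
          ((numExtFirst (subrel r {a : A | ∃ i : Fin m, j ≤ i ∧ Y i = a})
              ⟨Y j, ⟨j, le_refl j, rfl⟩⟩ : ℕ) : ℝ) /
            ((numExt (subrel r {a : A | ∃ i : Fin m, j ≤ i ∧ Y i = a}) : ℕ) : ℝ)) = 1 := by
  have : IsStrictOrder A r := { irrefl := hirr, trans := fun a b c => @htrans a b c }
  refine .trans (Finset.sum_congr rfl fun Y _ => Finset.prod_congr rfl fun j _ => ?_)
    (sum_queueJumpProb p m r hcard)
  rw [firstChoiceProb, ← Nat.card_eq_fintype_card, card_suffix]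

/-- Normalization of the top-down queue-jumping observation model: the probabilities
`q_D(Y)` sum to `1` over all `m!` enumerations `Y` of `A`. -/
theorem stmt7 {A : Type*} [Fintype A] [DecidableEq A] (m : ℕ) (hm : 1 ≤ m)
    (hcard : Fintype.card A = m)
    (r : A → A → Prop) (hirr : Irreflexive r) (htrans : Transitive r)
    (p : ℝ) (hp0 : 0 ≤ p) (hp1 : p ≤ 1) :
    ∑ Y : Fin m ≃ A, ∏ j : Fin m,
      (p / ((m - (j : ℕ) : ℕ) : ℝ) +
        (1 - p) *
          ((numExtFirst (subrel r {a : A | ∃ i : Fin m, j ≤ i ∧ Y i = a})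
              ⟨Y j, ⟨j, le_refl j, rfl⟩⟩ : ℕ) : ℝ) /
            ((numExt (subrel r {a : A | ∃ i : Fin m, j ≤ i ∧ Y i = a}) : ℕ) : ℝ)) = 1 :=
  stmt7_general m hcard r hirr htrans p
end

section
/- Telescoping reduction of the top-down queue-jumping model at zero noise: let r be a strict partial order on a finite type A with |A| = m ≥ 1 and let Y : Fin m ≃ A be an enumeration. Then ∏_{j=1}^{m} C_{Y_j}(r[{Y_j, …, Y_m}]) / C(r[{Y_j, …, Y_m}]) equals 1/C(r) if Y is a linear extension of r, and equals 0 otherwise. That is, the queue-jumping likelihood q_D with p = 0 is the uniform distribution on the linear extensions of r. -/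
open scoped Classical

/-! If `Y` is a linear extension of `r`, then `Y_j` is maximal in the suffix `{Y_j, …, Y_m}`, so
the extensions of that suffix starting with `Y_j` are the extensions of the next suffix with `Y_j`
prepended. The `j`-th factor is therefore `C(r[suffix (j+1)]) / C(r[suffix j])` and the product
telescopes to `C(r[∅]) / C(r) = 1 / C(r)`. The same identity shows that the suffix counts are
non-increasing in `j`, hence all at least `C(r[∅]) = 1`, so no denominator vanishes. If `Y` is not
a linear extension, some `Y_j` lies below a later `Y_i`, and no extension of the `j`-th suffix can
start with `Y_j`. -/

section Cons

variable {B : Type*}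

noncomputable def consEquiv {k : ℕ} (a : B) :
    {Y : Fin (k + 1) ≃ B // Y 0 = a} ≃ (Fin k ≃ {b // b ≠ a}) :=
  (((finSuccEquiv k).equivCongr (Equiv.refl B)).subtypeEquiv (by simp)).trans
    (Equiv.optionSubtype a)

@[simp]
lemma consEquiv_apply {k : ℕ} (a : B) (Y : {Y : Fin (k + 1) ≃ B // Y 0 = a}) (i : Fin k) :
    (consEquiv a Y i : B) = Y.1 i.succ :=
  rfl

lemma isLinExt_consEquiv_iff {k : ℕ} (r : B → B → Prop) (a : B) (hmax : ∀ b ≠ a, ¬ r b a)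
    (Y : {Y : Fin (k + 1) ≃ B // Y 0 = a}) :
    IsLinExt (subrel r {b | b ≠ a}) (consEquiv a Y) ↔ IsLinExt r Y.1 := by
  simp only [IsLinExt, Fin.forall_fin_succ, Fin.succ_lt_succ_iff, Fin.not_lt_zero, Fin.succ_pos,
    false_implies, true_and, forall_const, Y.2, subrel]
  exact ⟨fun h => ⟨fun i => hmax _ (consEquiv a Y i).2, h⟩, And.right⟩

end Cons

section Count

variable {B B' : Type*} [Fintype B] [Fintype B']

lemma numExt_eq_card {n : ℕ} (r : B → B → Prop) (hn : Fintype.card B = n) :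
    numExt r = Nat.card {Y : Fin n ≃ B // IsLinExt r Y} := by
  subst hn; rfl

lemma numExtFirst_eq_card {n : ℕ} (r : B → B → Prop) (a : B) (hn : Fintype.card B = n) :
    numExtFirst r a =
      Nat.card {Y : Fin n ≃ B // IsLinExt r Y ∧ ∀ i : Fin n, (i : ℕ) = 0 → Y i = a} := by
  subst hn; rfl

lemma numExt_congr_s8 (e : B ≃ B') (r : B → B → Prop) (r' : B' → B' → Prop)
    (hr : ∀ x y, r x y ↔ r' (e x) (e y)) : numExt r = numExt r' := by
  rw [numExt_eq_card r rfl, numExt_eq_card r' (Fintype.card_congr e).symm]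
  refine Nat.card_congr ((Equiv.refl _).equivCongr e |>.subtypeEquiv fun Y => ?_)
  simp [IsLinExt, hr]

lemma numExt_of_isEmpty [IsEmpty B] (r : B → B → Prop) : numExt r = 1 := by
  rw [numExt_eq_card r Fintype.card_eq_zero, Nat.card_eq_one_iff_unique]
  exact ⟨inferInstance, ⟨⟨Equiv.equivOfIsEmpty _ _, fun i => i.elim0⟩⟩⟩

lemma numExtFirst_le_numExt (r : B → B → Prop) (a : B) : numExtFirst r a ≤ numExt r :=
  Nat.card_le_card_of_injective (fun Y => ⟨Y.1, Y.2.1⟩) fun _ _ h =>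
    Subtype.ext (congrArg Subtype.val h :)

lemma numExtFirst_eq_zero_of_rel (r : B → B → Prop) {a b : B} (hba : b ≠ a) (hr : r b a) :
    numExtFirst r a = 0 := by
  refine Nat.card_eq_zero.mpr (Or.inl ⟨fun ⟨Y, hY, hfirst⟩ => ?_⟩)
  have hpos : 0 < (Y.symm b : ℕ) := by
    refine Nat.pos_of_ne_zero fun h => hba ?_
    simpa using hfirst _ h
  exact hY ⟨0, hpos.trans (Y.symm b).isLt⟩ (Y.symm b) hpos (by simpa [hfirst])

lemma numExtFirst_eq_numExt_compl (r : B → B → Prop) (a : B) (hmax : ∀ b ≠ a, ¬ r b a) :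
    numExtFirst r a = numExt (subrel r {b | b ≠ a}) := by
  have hcard : Fintype.card B = Fintype.card {b | b ≠ a} + 1 := by
    have := Fintype.card_pos_iff.mpr ⟨a⟩
    rw [Set.card_ne_eq]; omega
  rw [numExtFirst_eq_card r a hcard, numExt_eq_card _ rfl]
  refine Nat.card_congr (((Equiv.subtypeEquivRight fun Y => ?_).trans
    (Equiv.subtypeSubtypeEquivSubtypeInter _ _).symm).trans
    ((consEquiv a).subtypeEquiv fun Y => (isLinExt_consEquiv_iff r a hmax Y).symm))
  simp [Fin.val_eq_zero_iff, and_comm]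

end Count

lemma prod_range_div_of_ne_zero {G : Type*} [CommGroupWithZero G] (f : ℕ → G) (n : ℕ)
    (hf : ∀ k ≤ n, f k ≠ 0) : ∏ i ∈ Finset.range n, f (i + 1) / f i = f n / f 0 := by
  induction n with
  | zero => simp [hf 0 le_rfl]
  | succ n ih =>
    rw [Finset.prod_range_succ, ih fun k hk => hf k (hk.trans n.le_succ), mul_comm,
      div_mul_div_cancel₀ (hf n n.le_succ)]

section Suffix

variable {A : Type*} {m : ℕ} (Y : Fin m ≃ A)

def suffix (k : ℕ) : Set A := {a | ∃ i : Fin m, k ≤ (i : ℕ) ∧ Y i = a}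

variable {Y}

lemma mem_suffix {k : ℕ} {a : A} : a ∈ suffix Y k ↔ k ≤ (Y.symm a : ℕ) :=
  ⟨fun ⟨i, hi, hia⟩ => by simpa [← hia], fun h => ⟨Y.symm a, h, Y.apply_symm_apply a⟩⟩

variable [Fintype A] {r : A → A → Prop}

lemma numExt_suffix_zero : numExt (subrel r (suffix Y 0)) = numExt r :=
  numExt_congr_s8 (Equiv.subtypeUnivEquiv fun _ => mem_suffix.mpr (Nat.zero_le _)) _ _
    fun _ _ => Iff.rfl

lemma numExt_suffix_length : numExt (subrel r (suffix Y m)) = 1 :=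
  have : IsEmpty (suffix Y m) := ⟨fun ⟨_, h⟩ => (mem_suffix.mp h).not_gt (Fin.isLt _)⟩
  numExt_of_isEmpty _

lemma numExtFirst_suffix (hY : IsLinExt r Y) (k : Fin m) :
    numExtFirst (subrel r (suffix Y k)) ⟨Y k, mem_suffix.mpr (by simp)⟩ =
      numExt (subrel r (suffix Y (k + 1))) := by
  have hsucc : ∀ b : suffix Y k, b ∈ {b | b ≠ ⟨Y k, mem_suffix.mpr (by simp)⟩} ↔
      (b : A) ∈ suffix Y (k + 1) := by
    rintro ⟨b, hb⟩
    have hkb := mem_suffix.mp hb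
    simp only [Set.mem_ofPred_eq, ne_eq, Subtype.mk.injEq, mem_suffix, ← Y.symm_apply_eq,
      Fin.ext_iff]
    omega
  rw [numExtFirst_eq_numExt_compl]
  · convert numExt_congr_s8 ((Equiv.subtypeEquivRight hsucc).trans
      (Equiv.subtypeSubtypeEquivSubtype fun h => mem_suffix.mpr
        ((Nat.le_succ _).trans (mem_suffix.mp h)))) (subrel (subrel r _) _) (subrel r _)
      fun _ _ => Iff.rfl
  · rintro b hne hr
    have hlt := mem_suffix.mp ((hsucc b).mp hne)
    exact hY k (Y.symm b) hlt (by simpa [subrel] using hr)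

lemma one_le_numExt_suffix (hY : IsLinExt r Y) {k : ℕ} (hk : k ≤ m) :
    1 ≤ numExt (subrel r (suffix Y k)) := by
  induction hk using Nat.decreasingInduction with
  | self => exact numExt_suffix_length.ge
  | of_succ k hk ih =>
    exact ih.trans ((numExtFirst_suffix hY ⟨k, hk⟩).symm.trans_le (numExtFirst_le_numExt _ _))

end Suffix

theorem stmt8_general {A : Type*} [Fintype A] [DecidableEq A] (m : ℕ)
    (r : A → A → Prop)
    (Y : Fin m ≃ A) :
    (∏ j : Fin m,
      ((numExtFirst (subrel r {a : A | ∃ i : Fin m, j ≤ i ∧ Y i = a})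
          ⟨Y j, ⟨j, le_refl j, rfl⟩⟩ : ℕ) : ℝ) /
        ((numExt (subrel r {a : A | ∃ i : Fin m, j ≤ i ∧ Y i = a}) : ℕ) : ℝ)) =
      if IsLinExt r Y then 1 / ((numExt r : ℕ) : ℝ) else 0 := by
  split_ifs with hY
  · have hne : ∀ k ≤ m, (numExt (subrel r (suffix Y k)) : ℝ) ≠ 0 := fun k hk =>
      Nat.cast_ne_zero.mpr (Nat.one_le_iff_ne_zero.mp (one_le_numExt_suffix hY hk))
    calc _ = ∏ j : Fin m, (numExt (subrel r (suffix Y (j + 1))) : ℝ) /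
          numExt (subrel r (suffix Y j)) :=
          -- `congr!` reconciles the `Fintype` instances of the two descriptions of the suffix
          Finset.prod_congr rfl fun j _ => by rw [← numExtFirst_suffix hY j]; congr!
      _ = numExt (subrel r (suffix Y m)) / numExt (subrel r (suffix Y 0)) := by
          rw [Fin.prod_univ_eq_prod_range (fun k => (numExt (subrel r (suffix Y (k + 1))) : ℝ) /
            numExt (subrel r (suffix Y k)))]
          exact prod_range_div_of_ne_zero _ m hne
      _ = 1 / numExt r := by rw [numExt_suffix_length, numExt_suffix_zero, Nat.cast_one]
  · obtain ⟨i, j, hij, hji⟩ : ∃ i j : Fin m, i < j ∧ r (Y j) (Y i) := by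
      simpa [IsLinExt] using hY
    refine Finset.prod_eq_zero (Finset.mem_univ i) ?_
    rw [numExtFirst_eq_zero_of_rel (b := ⟨Y j, j, hij.le, rfl⟩) _ (by simpa using hij.ne') hji]
    simp

/-- Telescoping reduction of the top-down queue-jumping model at zero noise: the product
of the suffix-suborder ratios equals `1/C(r)` when `Y` is a linear extension of `r`, and
`0` otherwise. -/
theorem stmt8 {A : Type*} [Fintype A] [DecidableEq A] (m : ℕ) (hm : 1 ≤ m)
    (hcard : Fintype.card A = m)
    (r : A → A → Prop) (hirr : Irreflexive r) (htrans : Transitive r)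
    (Y : Fin m ≃ A) :
    (∏ j : Fin m,
      ((numExtFirst (subrel r {a : A | ∃ i : Fin m, j ≤ i ∧ Y i = a})
          ⟨Y j, ⟨j, le_refl j, rfl⟩⟩ : ℕ) : ℝ) /
        ((numExt (subrel r {a : A | ∃ i : Fin m, j ≤ i ∧ Y i = a}) : ℕ) : ℝ)) =
      if IsLinExt r Y then 1 / ((numExt r : ℕ) : ℝ) else 0 :=
  stmt8_general m r Y
end
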